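/- Let ρ > 0, x ∈ ℝⁿ_↓, and let k = μ(ρ, x) be the number of indices i ∈ {1,…,n} with 2 − ρx₁xᵢ < 0. (i) If k = 0, then e₁ is a global minimizer of ½wᵀA_{ρ,x}w over S^{n-1}_+. (ii) If 1 ≤ k ≤ n, then min{½wᵀA_{ρ,x}w : w ∈ S^{n-1}_+} = min{½w̃ᵀA_{ρ,x_{[k]}}w̃ : w̃ ∈ S^{k-1}_+}, where x_{[k]} = (x₁,…,x_k) and A_{ρ,x_{[k]}} is the k×k leading principal submatrix of A_{ρ,x}; moreover, if w̃* is a global minimizer of the latter problem, then the vector obtained from w̃* by appending n − k zeros is a global minimizer of the former problem. -/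

import Mathlib

/-!
With `s = ∑ wᵢ` and `t = ∑ xᵢwᵢ` the objective is `½wᵀA_{ρ,x}w = s² − (ρ/2)t²`, and on
`S^{n-1}_+` we have `s ≥ 1` and `0 ≤ t ≤ x₁s`. Since `x` is nonincreasing, the indices with
`2 − ρx₁xᵢ < 0` are exactly `1, …, k`.

If `k = 0`, then `ρx₁² ≤ 2` and `s² − (ρ/2)t² ≥ (1 − ρx₁²/2)s² ≥ 1 − ρx₁²/2`, the value at `e₁`.

If `k ≥ 1`, replace `w₁` by `r = (w₁² + ∑_{i>k} wᵢ²)^{1/2}` and the tail `wᵢ, i > k`, by zeros.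
This stays on `S^{n-1}_+` and lowers `s` by at least `ρx₁/2` times what it lowers `t`, because
`ρx₁xᵢ ≤ 2` on the tail while `ρx₁² > 2`; together with `t ≤ x₁s` this cannot increase
`s² − (ρ/2)t²`. So every value of the `n`-dimensional problem is dominated by one of the
`k`-dimensional problem, whose values are attained by zero padding.
-/

/-- The quadratic form `w ↦ ½ wᵀ A_{ρ,y} w` where `A_{ρ,y} = 2eeᵀ − ρyyᵀ`,
i.e. `(A_{ρ,y})_{ij} = 2 − ρ yᵢ yⱼ`. -/
noncomputable def qform {m : ℕ} (ρ : ℝ) (y w : Fin m → ℝ) : ℝ :=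
  (1 / 2) * ∑ i, ∑ j, (2 - ρ * y i * y j) * w i * w j

/-- `S^{m-1}_+`: the intersection of the unit sphere of `ℝᵐ` with the nonnegative
orthant. -/
def SPlus (m : ℕ) : Set (Fin m → ℝ) :=
  {w | (∑ i, (w i) ^ 2 = 1) ∧ ∀ i, 0 ≤ w i}

open Finset

lemma qform_eq_sq_sub_sq {m : ℕ} (ρ : ℝ) (y w : Fin m → ℝ) :
    qform ρ y w = (∑ i, w i) ^ 2 - ρ / 2 * (∑ i, y i * w i) ^ 2 := by
  rw [qform, sq, sq, sum_mul_sum, sum_mul_sum, mul_sum, mul_sum, ← sum_sub_distrib]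
  refine sum_congr rfl fun i _ => ?_
  rw [mul_sum, mul_sum, ← sum_sub_distrib]
  exact sum_congr rfl fun j _ => by ring

lemma sum_mul_le_mul_sum {ι R : Type*} [Fintype ι] [Semiring R] [PartialOrder R]
    [IsOrderedRing R] {y w : ι → R} {c : R} (hy : ∀ i, y i ≤ c) (hw : ∀ i, 0 ≤ w i) :
    ∑ i, y i * w i ≤ c * ∑ i, w i := by
  rw [mul_sum]
  exact sum_le_sum fun i _ => mul_le_mul_of_nonneg_right (hy i) (hw i)

lemma sum_apply_update {ι α M : Type*} [Fintype ι] [DecidableEq ι] [AddCommMonoid M]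
    (F : ι → α → M) (u : ι → α) (i : ι) (b : α) :
    ∑ j, F j (Function.update u i b j) + F i (u i) = ∑ j, F j (u j) + F i b := by
  rw [← add_sum_erase _ _ (mem_univ i), ← add_sum_erase _ _ (mem_univ i),
    Function.update_self,
    sum_congr rfl fun j hj => by rw [Function.update_of_ne (ne_of_mem_erase hj)]]
  abel

lemma Fin.lt_card_filter_iff_of_antitone {n : ℕ} {p : Fin n → Prop} [DecidablePred p]
    (hp : Antitone p) (i : Fin n) : (i : ℕ) < #(univ.filter p) ↔ p i := by
  constructor
  · intro hi
    by_contra hpi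
    have hsub : univ.filter p ⊆ Iio i := fun j hj =>
      mem_Iio.2 (lt_of_not_ge fun hij => hpi (hp hij (mem_filter.1 hj).2))
    have := card_le_card hsub
    rw [Fin.card_Iio] at this
    omega
  · intro hpi
    have hsub : Iic i ⊆ univ.filter p := fun j hj =>
      mem_filter.2 ⟨mem_univ j, hp (mem_Iic.1 hj) hpi⟩
    have := card_le_card hsub
    rw [Fin.card_Iic] at this
    omega

lemma one_le_sum_of_mem_SPlus {m : ℕ} {w : Fin m → ℝ} (hw : w ∈ SPlus m) : 1 ≤ ∑ i, w i := by
  have hsq : 1 ≤ (∑ i, w i) ^ 2 := hw.1 ▸ sum_sq_le_sq_sum_of_nonneg fun i _ => hw.2 i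
  nlinarith [sum_nonneg fun i (_ : i ∈ univ) => hw.2 i]

lemma single_mem_SPlus {m : ℕ} (i₀ : Fin m) :
    (fun i : Fin m => if i = i₀ then (1 : ℝ) else 0) ∈ SPlus m :=
  ⟨by simp [apply_ite (· ^ 2)], fun i => by positivity⟩

lemma qform_single {m : ℕ} (ρ : ℝ) (x : Fin m → ℝ) (i₀ : Fin m) :
    qform ρ x (fun i => if i = i₀ then 1 else 0) = 1 - ρ / 2 * x i₀ ^ 2 := by
  simp [qform_eq_sq_sub_sq]

lemma qform_single_le {m : ℕ} {ρ : ℝ} (hρ : 0 ≤ ρ) {x : Fin m → ℝ} (hx : ∀ i, 0 ≤ x i)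
    {i₀ : Fin m} (hmax : ∀ i, x i ≤ x i₀) (hsmall : ρ * x i₀ * x i₀ ≤ 2)
    {w : Fin m → ℝ} (hw : w ∈ SPlus m) :
    qform ρ x (fun i => if i = i₀ then 1 else 0) ≤ qform ρ x w := by
  rw [qform_single, qform_eq_sq_sub_sq]
  have hs := one_le_sum_of_mem_SPlus hw
  have ht : 0 ≤ ∑ i, x i * w i := sum_nonneg fun i _ => mul_nonneg (hx i) (hw.2 i)
  have hts := pow_le_pow_left₀ ht (sum_mul_le_mul_sum hmax hw.2) 2
  nlinarith [mul_le_mul_of_nonneg_left hts hρ, mul_le_mul_of_nonneg_left (one_le_pow₀ (n := 2) hs)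
    (sub_nonneg.2 hsmall)]

lemma append_zero_mem_SPlus {k m : ℕ} {u : Fin k → ℝ} (hu : u ∈ SPlus k) :
    Fin.append u (0 : Fin m → ℝ) ∈ SPlus (k + m) :=
  ⟨by simpa [Fin.sum_univ_add] using hu.1,
    fun i => Fin.addCases (fun j => by simpa using hu.2 j) (fun j => by simp) i⟩

lemma qform_append_zero {k m : ℕ} (ρ : ℝ) (x : Fin (k + m) → ℝ) (u : Fin k → ℝ) :
    qform ρ x (Fin.append u 0) = qform ρ (fun i => x (Fin.castAdd m i)) u := by
  simp [qform_eq_sq_sub_sq, Fin.sum_univ_add]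

lemma dite_lt_eq_append_zero {k m : ℕ} (u : Fin k → ℝ) :
    (fun i : Fin (k + m) => if h : (i : ℕ) < k then u ⟨i, h⟩ else 0) = Fin.append u 0 := by
  ext i
  refine Fin.addCases (fun j => ?_) (fun j => ?_) i <;> simp

-- `s, t` are `∑ wᵢ, ∑ xᵢwᵢ` before, `s', t'` after moving the tail mass onto one coordinate.
lemma sq_sub_mul_sq_le {ρ c s s' t t' : ℝ} (hρ : 0 ≤ ρ) (hs' : 0 ≤ s') (hss' : s' ≤ s)
    (ht : 0 ≤ t) (hsum : t + t' ≤ c * (s + s')) (hdiff : ρ / 2 * c * (t - t') ≤ s - s') :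
    s' ^ 2 - ρ / 2 * t' ^ 2 ≤ s ^ 2 - ρ / 2 * t ^ 2 := by
  rcases le_or_gt t t' with htt' | htt'
  · nlinarith [pow_le_pow_left₀ ht htt' 2, pow_le_pow_left₀ hs' hss' 2]
  · have h₁ := mul_le_mul_of_nonneg_left hsum (by positivity : 0 ≤ ρ / 2 * (t - t'))
    have h₂ := mul_le_mul_of_nonneg_right hdiff (by linarith : 0 ≤ s + s')
    nlinarith

lemma exists_qform_castAdd_le {k m : ℕ} {ρ : ℝ} (hρ : 0 ≤ ρ) {x : Fin (k + m) → ℝ}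
    (hx : ∀ i, 0 ≤ x i) {i₀ : Fin k} (hmax : ∀ i, x i ≤ x (Fin.castAdd m i₀))
    (hbig : 2 ≤ ρ * x (Fin.castAdd m i₀) * x (Fin.castAdd m i₀))
    (hsmall : ∀ j, ρ * x (Fin.castAdd m i₀) * x (Fin.natAdd k j) ≤ 2)
    {w : Fin (k + m) → ℝ} (hw : w ∈ SPlus (k + m)) :
    ∃ u ∈ SPlus k, qform ρ (fun i => x (Fin.castAdd m i)) u ≤ qform ρ x w := by
  set c := x (Fin.castAdd m i₀)
  set y : Fin k → ℝ := fun i => x (Fin.castAdd m i)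
  set z : Fin m → ℝ := fun j => x (Fin.natAdd k j)
  set a : Fin k → ℝ := fun i => w (Fin.castAdd m i)
  set b : Fin m → ℝ := fun j => w (Fin.natAdd k j)
  have ha : ∀ i, 0 ≤ a i := fun i => hw.2 _
  have hb : ∀ j, 0 ≤ b j := fun j => hw.2 _
  set r := √(a i₀ ^ 2 + ∑ j, b j ^ 2)
  have hr : r ^ 2 = a i₀ ^ 2 + ∑ j, b j ^ 2 := Real.sq_sqrt (by positivity)
  have hb₀ : 0 ≤ ∑ j, b j := sum_nonneg fun j _ => hb j
  have hb₂ : ∑ j, b j ^ 2 ≤ (∑ j, b j) ^ 2 := sum_sq_le_sq_sum_of_nonneg fun j _ => hb j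
  have har : a i₀ ≤ r :=
    Real.le_sqrt_of_sq_le (le_add_of_nonneg_right (sum_nonneg fun j _ => sq_nonneg (b j)))
  have hrb : r ≤ a i₀ + ∑ j, b j :=
    Real.sqrt_le_iff.2 ⟨by linarith [ha i₀], by nlinarith [ha i₀]⟩
  set u := Function.update a i₀ r
  have hu : u ∈ SPlus k := by
    refine ⟨?_, fun i => ?_⟩
    · have hw₁ := Fin.sum_univ_add (fun i => w i ^ 2)
      have hu₁ := sum_apply_update (fun _ v => v ^ 2) a i₀ r
      rw [hw.1] at hw₁
      linarith
    · rcases eq_or_ne i i₀ with rfl | hi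
      · simpa [u] using (ha i).trans har
      · simpa [u, hi] using ha i
  refine ⟨u, hu, ?_⟩
  have hs := Fin.sum_univ_add w
  have ht := Fin.sum_univ_add fun i => x i * w i
  have hs' := sum_apply_update (fun _ v => v) a i₀ r
  have ht' := sum_apply_update (fun i v => y i * v) a i₀ r
  have hbz : ρ * c * ∑ j, z j * b j ≤ 2 * ∑ j, b j := by
    rw [mul_sum]
    simpa only [mul_assoc] using sum_mul_le_mul_sum (y := fun j => ρ * c * z j) hsmall hb
  rw [qform_eq_sq_sub_sq, qform_eq_sq_sub_sq]
  refine sq_sub_mul_sq_le (c := c) hρ (sum_nonneg fun i _ => hu.2 i) ?_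
    (sum_nonneg fun i _ => mul_nonneg (hx i) (hw.2 i)) ?_ ?_
  · linarith
  · linarith [sum_mul_le_mul_sum hmax hw.2,
      sum_mul_le_mul_sum (fun i => hmax (Fin.castAdd m i)) hu.2]
  · have hyc : y i₀ = c := rfl
    have hδs : ∑ i, w i - ∑ i, u i = ∑ j, b j - (r - a i₀) := by linarith
    have hδt : ∑ i, x i * w i - ∑ i, y i * u i = ∑ j, z j * b j - c * (r - a i₀) := by
      rw [hyc] at ht'
      linarith
    rw [hδs, hδt]
    nlinarith [mul_le_mul_of_nonneg_right hbig (sub_nonneg.2 har)]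

theorem stmt_10 {n : ℕ} (hn : 0 < n) (ρ : ℝ) (hρ : 0 < ρ)
    (x : Fin n → ℝ) (hdesc : ∀ i j : Fin n, i ≤ j → x j ≤ x i) (hnonneg : ∀ i, 0 ≤ x i)
    (k : ℕ)
    (hk : k = (Finset.univ.filter fun i : Fin n => 2 - ρ * x ⟨0, hn⟩ * x i < 0).card)
    (hkn : k ≤ n) :
    -- (i)
    (k = 0 →
      ((fun i : Fin n => if i = ⟨0, hn⟩ then (1 : ℝ) else 0) ∈ SPlus n ∧
       ∀ w ∈ SPlus n,
         qform ρ x (fun i : Fin n => if i = ⟨0, hn⟩ then (1 : ℝ) else 0) ≤ qform ρ x w)) ∧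
    -- (ii)
    (1 ≤ k →
      (sInf (qform ρ x '' SPlus n) =
        sInf (qform ρ (fun i : Fin k => x (Fin.castLE hkn i)) '' SPlus k) ∧
       ∀ wt : Fin k → ℝ, wt ∈ SPlus k →
         (∀ w ∈ SPlus k, qform ρ (fun i : Fin k => x (Fin.castLE hkn i)) wt ≤
            qform ρ (fun i : Fin k => x (Fin.castLE hkn i)) w) →
         ((fun i : Fin n => if h : (i : ℕ) < k then wt ⟨i, h⟩ else 0) ∈ SPlus n ∧
          ∀ w ∈ SPlus n,
            qform ρ x (fun i : Fin n => if h : (i : ℕ) < k then wt ⟨i, h⟩ else 0) ≤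
              qform ρ x w))) := by
  obtain ⟨m, rfl⟩ := Nat.exists_eq_add_of_le hkn
  set i₀ : Fin (k + m) := ⟨0, hn⟩
  have hmax : ∀ i, x i ≤ x i₀ := fun i => hdesc i₀ i (Nat.zero_le _)
  have hanti : Antitone fun i => 2 - ρ * x i₀ * x i < 0 := fun i j hij hj => by
    nlinarith [mul_le_mul_of_nonneg_left (hdesc i j hij) (mul_nonneg hρ.le (hnonneg i₀))]
  have hbad : ∀ i : Fin (k + m), (i : ℕ) < k ↔ 2 - ρ * x i₀ * x i < 0 := fun i => by
    have := Fin.lt_card_filter_iff_of_antitone hanti i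
    rwa [← hk] at this
  refine ⟨fun hk0 => ⟨single_mem_SPlus i₀, fun w hw => ?_⟩, fun hk1 => ?_⟩
  · exact qform_single_le hρ.le hnonneg hmax (by linarith [(hbad i₀).not.1 (by omega)]) hw
  have hbig : 2 ≤ ρ * x i₀ * x i₀ := by linarith [(hbad i₀).1 hk1]
  have hsmall : ∀ j : Fin m, ρ * x i₀ * x (Fin.natAdd k j) ≤ 2 := fun j => by
    linarith [(hbad (Fin.natAdd k j)).not.1 (by simp)]
  have hred : ∀ w ∈ SPlus (k + m),
      ∃ u ∈ SPlus k, qform ρ (fun i => x (Fin.castAdd m i)) u ≤ qform ρ x w :=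
    fun w hw => exists_qform_castAdd_le (i₀ := ⟨0, hk1⟩) hρ.le hnonneg hmax hbig hsmall hw
  refine ⟨csInf_eq_csInf_of_forall_exists_le ?_ ?_, fun u hu hmin => ?_⟩
  · rintro _ ⟨w, hw, rfl⟩
    obtain ⟨u, hu, hle⟩ := hred w hw
    exact ⟨_, ⟨u, hu, rfl⟩, hle⟩
  · rintro _ ⟨u, hu, rfl⟩
    exact ⟨_, ⟨_, append_zero_mem_SPlus hu, rfl⟩, (qform_append_zero ρ x u).le⟩
  rw [dite_lt_eq_append_zero, qform_append_zero]
  refine ⟨append_zero_mem_SPlus hu, fun w hw => ?_⟩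
  obtain ⟨v, hv, hle⟩ := hred w hw
  exact (hmin v hv).trans hle
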